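/- arXiv:1406.6193 — 2 statements merged into one kernel-verified Lean document; each statement's English description precedes it below -/
import Mathlib

section
/- Let a > 0 be real, n a natural number, and x a complex number that is not a nonnegative integer less than n (so that (−x)_n ≠ 0). Then the Charlier polynomial satisfies the identity a^n · C_n(x;a)/(−x)_n = ∑_{k=0}^n [(n−k+1)_k/(1)_k] · a^k/(n−k−x)_k. -/
open Filter Topology Finset

/-- The Pochhammer symbol (rising factorial) `(u)_k = u (u+1) ⋯ (u+k-1)`, with `(u)_0 = 1`. -/
noncomputable def poch (u : ℂ) (k : ℕ) : ℂ := ∏ i ∈ range k, (u + i)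

/-- The Charlier polynomial `C_n(x; a) = ∑_{j=0}^n (−n)_j (−x)_j / j! · (−1/a)^j`. -/
noncomputable def charlier (a : ℝ) (n : ℕ) (x : ℂ) : ℂ :=
  ∑ j ∈ range (n + 1),
    poch (-(n : ℂ)) j * poch (-x) j / (j.factorial : ℂ) * (-(1 / (a : ℂ))) ^ j

/-! Since `(−n)_j / j! = (−1)^j (n choose j)`, the signs cancel against `(−1/a)^j` and
`C_n(x;a) = ∑_j (n choose j) (−x)_j / a^j`. Reindexing by `j = n − k` and splitting
`(−x)_n = (−x)_{n−k} (n−k−x)_k` turns the `j`-th term of `aⁿ C_n(x;a) / (−x)_n` into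
`(n choose k) a^k / (n−k−x)_k`, and `(n−k+1)_k / (1)_k = (n choose k)`. -/

theorem poch_zero (u : ℂ) : poch u 0 = 1 := prod_range_zero _

theorem poch_succ (u : ℂ) (k : ℕ) : poch u (k + 1) = poch u k * (u + k) := prod_range_succ _ _

theorem poch_add (u : ℂ) (m k : ℕ) : poch u (m + k) = poch u m * poch (u + m) k := by
  simp only [poch, prod_range_add, Nat.cast_add, add_assoc]

theorem poch_natCast (m k : ℕ) : poch (m : ℂ) k = m.ascFactorial k := by
  induction k with
  | zero => simp [poch_zero]
  | succ k ih => rw [poch_succ, ih, Nat.ascFactorial_succ]; push_cast; ring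

theorem poch_one (k : ℕ) : poch 1 k = k.factorial := by
  simpa using poch_natCast 1 k

theorem poch_neg_natCast (n j : ℕ) : poch (-(n : ℂ)) j = (-1) ^ j * n.descFactorial j := by
  induction j with
  | zero => simp [poch_zero]
  | succ j ih =>
    rw [poch_succ, ih, Nat.descFactorial_succ]
    rcases le_or_gt j n with hjn | hnj
    · push_cast [hjn]; ring
    · simp [Nat.descFactorial_eq_zero_iff_lt.mpr hnj]

theorem poch_neg_natCast_div_factorial (n j : ℕ) :
    poch (-(n : ℂ)) j / j.factorial = (-1) ^ j * n.choose j := by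
  have : (j.factorial : ℂ) ≠ 0 := by exact_mod_cast j.factorial_ne_zero
  rw [poch_neg_natCast, Nat.descFactorial_eq_factorial_mul_choose]
  push_cast
  field_simp

theorem poch_natCast_add_one_div_poch_one (m k : ℕ) :
    poch ((m : ℂ) + 1) k / poch 1 k = (m + k).choose k := by
  have : (k.factorial : ℂ) ≠ 0 := by exact_mod_cast k.factorial_ne_zero
  rw [← Nat.cast_add_one, poch_natCast, Nat.ascFactorial_eq_factorial_mul_choose, poch_one]
  push_cast
  field_simp

theorem poch_neg_ne_zero {n : ℕ} {x : ℂ} (hx : ∀ m : ℕ, m < n → x ≠ (m : ℂ)) :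
    poch (-x) n ≠ 0 :=
  prod_ne_zero_iff.mpr fun i hi h => hx i (mem_range.mp hi) (by linear_combination -h)

theorem charlier_eq_sum_choose (a : ℝ) (n : ℕ) (x : ℂ) :
    charlier a n x = ∑ j ∈ range (n + 1), n.choose j * poch (-x) j / (a : ℂ) ^ j := by
  refine sum_congr rfl fun j _ => ?_
  have hsign : ((-1 : ℂ) ^ j) ^ 2 = 1 := by rw [← pow_mul, pow_mul', neg_one_sq, one_pow]
  rw [mul_div_right_comm, poch_neg_natCast_div_factorial, neg_pow (1 / (a : ℂ)), one_div_pow]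
  linear_combination (n.choose j * poch (-x) j / (a : ℂ) ^ j) * hsign

/-- For `a > 0` and `x` not a nonnegative integer less than `n` (so that `(−x)_n ≠ 0`),
`aⁿ C_n(x;a) / (−x)_n = ∑_{k=0}^n (n−k+1)_k / (1)_k · a^k / (n−k−x)_k`. -/
theorem charlier_identity (a : ℝ) (ha : 0 < a) (n : ℕ) (x : ℂ)
    (hx : ∀ m : ℕ, m < n → x ≠ (m : ℂ)) :
    (a : ℂ) ^ n * charlier a n x / poch (-x) n =
      ∑ k ∈ range (n + 1),
        poch ((n : ℂ) - (k : ℂ) + 1) k / poch 1 k * (a : ℂ) ^ k /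
          poch ((n : ℂ) - (k : ℂ) - x) k := by
  have ha0 : (a : ℂ) ≠ 0 := by exact_mod_cast ha.ne'
  have hpoch := poch_neg_ne_zero hx
  rw [charlier_eq_sum_choose, mul_sum, sum_div, ← sum_range_reflect]
  refine sum_congr rfl fun k hk => ?_
  obtain ⟨m, rfl⟩ := Nat.exists_eq_add_of_le' (mem_range_succ_iff.mp hk)
  have hshift : ((m + k : ℕ) : ℂ) - k = m := by push_cast; ring
  rw [poch_add] at hpoch
  obtain ⟨hm, hmk⟩ := mul_ne_zero_iff.mp hpoch
  rw [show m + k + 1 - 1 - k = m by omega, hshift, sub_eq_neg_add, poch_add,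
    poch_natCast_add_one_div_poch_one, Nat.choose_symm_add]
  field_simp
  ring
end

section
/- Let a > 0 be real and let C*_n(x;a) be the associated Charlier polynomials, defined by the recurrence x·C*_n = C*_{n+1} + (n+a)·C*_n + a·n·C*_{n−1} with C*_0 = 0, C*_1 = 1. Then for every complex number x, lim_{n→∞} (−1)^n · C*_n(x;a)/Γ(n−x) = −e^a · ∑_{k=0}^∞ (−a)^k/Γ(1−x+k), where each term 1/Γ(1−x+k) is interpreted as 0 when 1−x+k is a nonpositive integer. -/
/-! The signed sequence `b n = (-1)ⁿ C*ₙ(x; a)` satisfies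
`b (n+2) = (n+1+a-x) b (n+1) - a (n+1) b n`. This recurrence has the minimal solution
`aⁿ n! uₙ` with `uₙ = ∑ₘ C(n+m, m) (-a)ᵐ / Γ(n+m+1-x)`, and `Γ(n+1-x) uₙ → e^{-a}` by dominated
convergence, each term tending to `(-a)ᵐ / m!`. The Casoratian of `b` and this solution gives the
conserved quantity `b (n+1) uₙ - a (n+1) b n u (n+1) = -u₀`. In terms of `Dₙ = b n / Γ(n-x)` and
`Gₙ = Γ(n+1-x) uₙ` it reads `D (n+1) Gₙ = εₙ G (n+1) Dₙ - u₀` with `εₙ = O(1/n)`, a perturbed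
first-order recurrence whose solutions converge to `-u₀ / e^{-a}`; and `u₀` is the series of the
statement. -/

open Filter Topology

theorem tendsto_of_eventually_eq_smul_add {𝕜 E : Type*} [NormedField 𝕜] [NormedAddCommGroup E]
    [NormedSpace 𝕜 E] {α : ℕ → 𝕜} {β u : ℕ → E} {b : E}
    (hα : Tendsto α atTop (𝓝 0)) (hβ : Tendsto β atTop (𝓝 b))
    (hu : ∀ᶠ n in atTop, u (n + 1) = α n • u n + β n) : Tendsto u atTop (𝓝 b) := by
  obtain ⟨B, hB⟩ := hβ.norm.isBoundedUnder_le
  have hα_half : ∀ᶠ n in atTop, ‖α n‖ ≤ 1 / 2 :=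
    hα.norm.eventually (eventually_le_nhds (by norm_num))
  obtain ⟨N, hN⟩ := eventually_atTop.1 (hα_half.and ((eventually_map.1 hB).and hu))
  set M := max ‖u N‖ (2 * B)
  have hM : ∀ k, ‖u (N + k)‖ ≤ M := by
    intro k
    induction k with
    | zero => exact le_max_left _ _
    | succ k ih =>
      obtain ⟨hαk, hβk, huk⟩ := hN (N + k) (Nat.le_add_right N k)
      calc ‖u (N + k + 1)‖ ≤ ‖α (N + k)‖ * ‖u (N + k)‖ + ‖β (N + k)‖ := by
            rw [huk, ← norm_smul]; exact norm_add_le _ _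
        _ ≤ 1 / 2 * M + B := by gcongr
        _ ≤ M := by linarith [le_max_right ‖u N‖ (2 * B)]
  have hu_bdd : IsBoundedUnder (· ≤ ·) atTop (norm ∘ u) :=
    ⟨M, eventually_map.2 <| eventually_atTop.2 ⟨N, fun n hn => by
      obtain ⟨k, rfl⟩ := Nat.exists_eq_add_of_le hn
      exact hM k⟩⟩
  have hlim : Tendsto (fun n => α n • u n + β n) atTop (𝓝 b) := by
    simpa using (hα.zero_smul_isBoundedUnder_le hu_bdd).add hβ
  exact (tendsto_add_atTop_iff_nat 1).1 (hlim.congr' (hu.mono fun n hn => hn.symm))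

theorem casoratian_eq {R : Type*} [CommRing R] {p q y z : ℕ → R}
    (hy : ∀ n, y (n + 2) = p n * y (n + 1) - q n * y n)
    (hz : ∀ n, q (n + 1) * z (n + 2) = p n * z (n + 1) - z n) (n : ℕ) :
    y (n + 1) * z n - q n * y n * z (n + 1) = y 1 * z 0 - q 0 * y 0 * z 1 := by
  induction n with
  | zero => rfl
  | succ n ih => linear_combination z (n + 1) * hy n - y (n + 1) * hz n + ih

theorem tendsto_natCast_add_div_natCast_add_sub (x : ℂ) (k : ℕ) :
    Tendsto (fun n : ℕ => ((n : ℂ) + k) / (n + k - x)) atTop (𝓝 1) := by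
  refine ((tendsto_natCast_div_add_atTop (-x)).comp (tendsto_add_atTop_nat k)).congr fun n => ?_
  simp [sub_eq_add_neg]

theorem tendsto_mul_natCast_add_one_div_mul (a x : ℂ) :
    Tendsto (fun n : ℕ => a * (n + 1) / ((n - x) * (n + 1 - x))) atTop (𝓝 0) := by
  have hinv : Tendsto (fun n : ℕ => ((n : ℂ) - x)⁻¹) atTop (𝓝 0) :=
    tendsto_inv₀_cobounded.comp
      ((tendsto_sub_const_cobounded x).comp tendsto_natCast_atTop_cobounded)
  have h := ((tendsto_natCast_add_div_natCast_add_sub x 1).const_mul a).mul hinv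
  rw [mul_one, mul_zero] at h
  refine h.congr fun n => ?_
  push_cast
  simp only [div_eq_mul_inv, mul_inv]
  ring

namespace AssociatedCharlier

open Complex
open scoped Nat

noncomputable def minimalTerm (a x : ℂ) (n m : ℕ) : ℂ :=
  (n + m).choose m * (-a) ^ m / Gamma (n + m + 1 - x)

variable (a x : ℂ)

theorem minimalTerm_succ_right (n m : ℕ) :
    ((m : ℂ) + 1) * (n + m + 1 - x) * minimalTerm a x n (m + 1) =
      -a * (n + m + 1) * minimalTerm a x n m := by
  have hC : (((n + (m + 1)).choose (m + 1) : ℕ) : ℂ) * (m + 1) =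
      (n + m + 1) * (n + m).choose m := by
    exact_mod_cast (Nat.add_one_mul_choose_eq (n + m) m).symm
  have hΓ := one_div_Gamma_eq_self_mul_one_div_Gamma_add_one ((n : ℂ) + m + 1 - x)
  simp only [minimalTerm, div_eq_mul_inv, hΓ]
  rw [show (n : ℂ) + ((m + 1 : ℕ) : ℂ) + 1 - x = n + m + 1 - x + 1 by push_cast; ring]
  linear_combination (-a) ^ (m + 1) * (n + m + 1 - x) * (Gamma (n + m + 1 - x + 1))⁻¹ * hC

theorem minimalTerm_zero_succ (n : ℕ) :
    ((n : ℂ) + 1 - x) * minimalTerm a x (n + 1) 0 = minimalTerm a x n 0 := by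
  simp only [minimalTerm, Nat.choose_zero_right, pow_zero, Nat.cast_zero, Nat.cast_one, add_zero,
    Nat.cast_add, one_mul, div_eq_mul_inv,
    one_div_Gamma_eq_self_mul_one_div_Gamma_add_one ((n : ℂ) + 1 - x)]
  ring_nf

theorem minimalTerm_recurrence (n m : ℕ) :
    a * (n + 2) * minimalTerm a x (n + 2) m - (n + 1 - x) * minimalTerm a x (n + 1) (m + 1) =
      a * minimalTerm a x (n + 1) m - minimalTerm a x n (m + 1) := by
  have hC₁ : (((n + 2 + m).choose m : ℕ) : ℂ) * (n + 2) =
      (n + 1 + (m + 1)).choose (m + 1) * (m + 1) := by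
    have h := Nat.choose_succ_right_eq (n + 2 + m) m
    rw [Nat.add_sub_cancel] at h
    rw [show n + 1 + (m + 1) = n + 2 + m by omega]
    exact_mod_cast h.symm
  have hC₂ : (((n + 1 + m).choose m : ℕ) : ℂ) + (n + (m + 1)).choose (m + 1) =
      (n + 1 + (m + 1)).choose (m + 1) := by
    rw [show n + 1 + (m + 1) = (n + m + 1) + 1 by omega, Nat.choose_succ_succ',
      show n + 1 + m = n + m + 1 by omega, show n + (m + 1) = n + m + 1 by omega]
    push_cast; rfl
  have hΓ := one_div_Gamma_eq_self_mul_one_div_Gamma_add_one ((n : ℂ) + m + 2 - x)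
  simp only [minimalTerm, div_eq_mul_inv]
  rw [show ((n + 2 : ℕ) : ℂ) + (m : ℂ) + 1 - x = n + m + 2 - x + 1 by push_cast; ring,
    show ((n + 1 : ℕ) : ℂ) + ((m + 1 : ℕ) : ℂ) + 1 - x = n + m + 2 - x + 1 by push_cast; ring,
    show ((n + 1 : ℕ) : ℂ) + (m : ℂ) + 1 - x = n + m + 2 - x by push_cast; ring,
    show (n : ℂ) + ((m + 1 : ℕ) : ℂ) + 1 - x = n + m + 2 - x by push_cast; ring, hΓ]
  linear_combination (-a) ^ m * a * (Gamma (n + m + 2 - x + 1))⁻¹ * (hC₁ - (n + m + 2 - x) * hC₂)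

theorem norm_minimalTerm_succ_le {n m : ℕ} (h : 2 * ‖x‖ ≤ n + m + 1) :
    (m + 1) * ‖minimalTerm a x n (m + 1)‖ ≤ 2 * ‖a‖ * ‖minimalTerm a x n m‖ := by
  have hnorm : ∀ k : ℕ, ‖(k : ℂ) + 1‖ = k + 1 := fun k => by exact_mod_cast norm_natCast (k + 1)
  have hP : ‖(n : ℂ) + m + 1‖ = n + m + 1 := by rw [← Nat.cast_add, hnorm]; push_cast; ring
  have hR : ((n : ℝ) + m + 1) / 2 ≤ ‖(n : ℂ) + m + 1 - x‖ := by
    linarith [hP ▸ norm_sub_norm_le ((n : ℂ) + m + 1) x]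
  have hE := congrArg norm (minimalTerm_succ_right a x n m)
  simp only [norm_mul, norm_neg, hP, hnorm] at hE
  have hPpos : (0 : ℝ) < n + m + 1 := by positivity
  refine le_of_mul_le_mul_right ?_ hPpos
  calc (m + 1) * ‖minimalTerm a x n (m + 1)‖ * (n + m + 1)
      ≤ (m + 1) * ‖minimalTerm a x n (m + 1)‖ * (2 * ‖(n : ℂ) + m + 1 - x‖) := by gcongr; linarith
    _ = 2 * ‖a‖ * ‖minimalTerm a x n m‖ * (n + m + 1) := by linear_combination 2 * hE

theorem summable_minimalTerm (n : ℕ) : Summable (minimalTerm a x n) := by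
  refine summable_of_ratio_norm_eventually_le (r := 1 / 2) (by norm_num) ?_
  filter_upwards [eventually_ge_atTop ⌈2 * ‖x‖ + 4 * ‖a‖⌉₊] with m hm
  have hm' : 2 * ‖x‖ + 4 * ‖a‖ ≤ m := Nat.ceil_le.1 hm
  have h := norm_minimalTerm_succ_le a x (n := n) (m := m)
    (by linarith [norm_nonneg a, n.cast_nonneg (α := ℝ)])
  have h2 : 2 * ‖a‖ * ‖minimalTerm a x n m‖ ≤ (m + 1) * (1 / 2 * ‖minimalTerm a x n m‖) := by
    have ha : 4 * ‖a‖ ≤ m + 1 := by linarith [norm_nonneg x]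
    nlinarith [mul_le_mul_of_nonneg_right ha (norm_nonneg (minimalTerm a x n m))]
  exact le_of_mul_le_mul_left (h.trans h2) (by positivity)

noncomputable def minimalSolution (a x : ℂ) (n : ℕ) : ℂ := ∑' m, minimalTerm a x n m

theorem minimalSolution_recurrence (n : ℕ) :
    a * (n + 2) * minimalSolution a x (n + 2) =
      (n + 1 + a - x) * minimalSolution a x (n + 1) - minimalSolution a x n := by
  have hsum (k : ℕ) : HasSum (minimalTerm a x k) (minimalSolution a x k) :=
    (summable_minimalTerm a x k).hasSum
  have hshift (k : ℕ) : HasSum (fun m => minimalTerm a x k (m + 1))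
      (minimalSolution a x k - minimalTerm a x k 0) := by
    simpa using (hasSum_nat_add_iff' 1).2 (hsum k)
  have hL := ((hsum (n + 2)).mul_left (a * (n + 2))).sub
    ((hshift (n + 1)).mul_left ((n : ℂ) + 1 - x))
  have hR := ((hsum (n + 1)).mul_left a).sub (hshift n)
  rw [← funext (minimalTerm_recurrence a x n)] at hR
  linear_combination hL.unique hR - minimalTerm_zero_succ a x n

theorem Gamma_mul_minimalTerm_zero {n : ℕ} (hn : x.re < n + 1) :
    Gamma (n + 1 - x) * minimalTerm a x n 0 = 1 := by
  have hΓ : Gamma (n + 1 - x) ≠ 0 := Gamma_ne_zero_of_re_pos (by simp; linarith)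
  simp [minimalTerm, hΓ]

theorem norm_Gamma_mul_minimalTerm_le {n : ℕ} (hn : 2 * ‖x‖ ≤ n) (m : ℕ) :
    ‖Gamma (n + 1 - x) * minimalTerm a x n m‖ ≤ (2 * ‖a‖) ^ m / m ! := by
  induction m with
  | zero =>
    rw [Gamma_mul_minimalTerm_zero a x (by linarith [re_le_norm x, norm_nonneg x])]
    simp
  | succ m ih =>
    have h := norm_minimalTerm_succ_le a x (n := n) (m := m) (by linarith [m.cast_nonneg (α := ℝ)])
    rw [norm_mul] at ih ⊢
    rw [le_div_iff₀ (by positivity)] at ih ⊢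
    push_cast [Nat.factorial_succ]
    calc ‖Gamma (n + 1 - x)‖ * ‖minimalTerm a x n (m + 1)‖ * ((m + 1) * m !)
        = ‖Gamma (n + 1 - x)‖ * ((m + 1) * ‖minimalTerm a x n (m + 1)‖) * m ! := by ring
      _ ≤ ‖Gamma (n + 1 - x)‖ * (2 * ‖a‖ * ‖minimalTerm a x n m‖) * m ! := by gcongr
      _ = 2 * ‖a‖ * (‖Gamma (n + 1 - x)‖ * ‖minimalTerm a x n m‖ * m !) := by ring
      _ ≤ 2 * ‖a‖ * (2 * ‖a‖) ^ m := by gcongr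
      _ = (2 * ‖a‖) ^ (m + 1) := by ring

theorem tendsto_Gamma_mul_minimalTerm (m : ℕ) :
    Tendsto (fun n : ℕ => Gamma (n + 1 - x) * minimalTerm a x n m) atTop
      (𝓝 ((-a) ^ m / m !)) := by
  induction m with
  | zero =>
    refine tendsto_const_nhds.congr' ?_
    filter_upwards [eventually_gt_atTop ⌈x.re⌉₊] with n hn
    rw [Gamma_mul_minimalTerm_zero a x (by linarith [Nat.lt_of_ceil_lt hn])]
    simp
  | succ m ih =>
    have hratio : Tendsto (fun n : ℕ => ((n : ℂ) + m + 1) / (n + m + 1 - x)) atTop (𝓝 1) :=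
      (tendsto_natCast_add_div_natCast_add_sub x (m + 1)).congr fun n => by push_cast; ring_nf
    have hlim := (hratio.const_mul (-a / (m + 1))).mul ih
    convert hlim.congr' ?_ using 2
    · push_cast [Nat.factorial_succ]
      field_simp
      ring
    filter_upwards [eventually_gt_atTop ⌈x.re⌉₊] with n hn
    have hz : (n : ℂ) + m + 1 - x ≠ 0 := ne_zero_of_re_pos <| by
      simp only [sub_re, add_re, natCast_re, one_re]
      linarith [Nat.lt_of_ceil_lt hn, m.cast_nonneg (α := ℝ)]
    have hm : (m : ℂ) + 1 ≠ 0 := by exact_mod_cast m.succ_ne_zero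
    field_simp
    linear_combination -Gamma (n + 1 - x) * minimalTerm_succ_right a x n m

theorem tendsto_Gamma_mul_minimalSolution :
    Tendsto (fun n : ℕ => Gamma (n + 1 - x) * minimalSolution a x n) atTop (𝓝 (exp (-a))) := by
  have hexp : ∑' m : ℕ, (-a) ^ m / m ! = exp (-a) := by
    rw [exp_eq_exp_ℂ]
    exact (NormedSpace.expSeries_div_hasSum_exp (-a)).tsum_eq
  simp_rw [minimalSolution, ← tsum_mul_left]
  rw [← hexp]
  refine tendsto_tsum_of_dominated_convergence (bound := fun m => (2 * ‖a‖) ^ m / m !)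
    (Real.summable_pow_div_factorial _) (tendsto_Gamma_mul_minimalTerm a x) ?_
  filter_upwards [eventually_ge_atTop ⌈2 * ‖x‖⌉₊] with n hn
  exact norm_Gamma_mul_minimalTerm_le a x (Nat.ceil_le.1 hn)

theorem tendsto_div_Gamma_of_recurrence (b : ℕ → ℂ)
    (hb : ∀ n : ℕ, b (n + 2) = (n + 1 + a - x) * b (n + 1) - a * (n + 1) * b n) :
    Tendsto (fun n : ℕ => b n / Gamma (n - x)) atTop
      (𝓝 (exp a * (b 1 * minimalSolution a x 0 - a * b 0 * minimalSolution a x 1))) := by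
  set u := minimalSolution a x
  set W := b 1 * u 0 - a * b 0 * u 1
  set G : ℕ → ℂ := fun n => Gamma (n + 1 - x) * u n
  have hG : Tendsto G atTop (𝓝 (exp (-a))) := tendsto_Gamma_mul_minimalSolution a x
  have hW (n : ℕ) : b (n + 1) * u n - a * (n + 1) * b n * u (n + 1) = W := by
    simpa using casoratian_eq (p := fun n => n + 1 + a - x) (q := fun n => a * (n + 1)) hb
      (fun n => by push_cast; linear_combination minimalSolution_recurrence a x n) n
  refine tendsto_of_eventually_eq_smul_add
    (α := fun n => a * (n + 1) / ((n - x) * (n + 1 - x)) * G (n + 1) / G n)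
    (β := fun n => W / G n) ?_ ?_ ?_
  · have := ((tendsto_mul_natCast_add_one_div_mul a x).mul
      (hG.comp (tendsto_add_atTop_nat 1))).div hG (exp_ne_zero _)
    rwa [zero_mul, zero_div] at this
  · have := (tendsto_const_nhds (x := W)).div hG (exp_ne_zero _)
    rwa [exp_neg, div_inv_eq_mul, mul_comm] at this
  · filter_upwards [hG.eventually_ne (exp_ne_zero _), eventually_gt_atTop ⌈x.re⌉₊] with n hGn hn
    have hx : x.re < n := Nat.lt_of_ceil_lt hn
    have h0 : (n : ℂ) - x ≠ 0 := ne_zero_of_re_pos (by simpa using hx)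
    have h1 : (n : ℂ) + 1 - x ≠ 0 := ne_zero_of_re_pos (by simp; linarith)
    have hΓ0 : Gamma (n - x) ≠ 0 := Gamma_ne_zero_of_re_pos (by simpa using hx)
    have hΓ1 : Gamma (n + 1 - x) = (n - x) * Gamma (n - x) := by
      rw [← Gamma_add_one _ h0]; ring_nf
    have hΓ2 : Gamma ((n + 1 : ℕ) + 1 - x) = (n + 1 - x) * ((n - x) * Gamma (n - x)) := by
      rw [← hΓ1, ← Gamma_add_one _ h1]; push_cast; ring_nf
    simp only [G, smul_eq_mul] at hGn ⊢
    rw [hΓ1] at hGn ⊢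
    rw [hΓ2, show ((n + 1 : ℕ) : ℂ) - x = n + 1 - x by push_cast; ring, hΓ1]
    have hu : u n ≠ 0 := right_ne_zero_of_mul hGn
    field_simp
    linear_combination hW n

end AssociatedCharlier

open AssociatedCharlier

theorem assoc_charlier_mehler_heine_entire_general (a : ℝ) (Cs : ℕ → ℂ → ℂ)
    (hCs0 : ∀ x : ℂ, Cs 0 x = 0) (hCs1 : ∀ x : ℂ, Cs 1 x = 1)
    (hCsrec : ∀ x : ℂ, ∀ n : ℕ, x * Cs (n + 1) x =
      Cs (n + 2) x + (((n : ℂ) + 1) + (a : ℂ)) * Cs (n + 1) x +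
        (a : ℂ) * ((n : ℂ) + 1) * Cs n x)
    (x : ℂ) :
    Tendsto (fun n : ℕ => (-1 : ℂ) ^ n * Cs n x / Complex.Gamma ((n : ℂ) - x)) atTop
      (𝓝 (-(Real.exp a : ℂ) *
        ∑' k : ℕ, (-(a : ℂ)) ^ k / Complex.Gamma (1 - x + k))) := by
  have hrec (n : ℕ) : (-1) ^ (n + 2) * Cs (n + 2) x =
      (n + 1 + a - x) * ((-1) ^ (n + 1) * Cs (n + 1) x) - a * (n + 1) * ((-1) ^ n * Cs n x) := by
    linear_combination (-1) ^ (n + 1) * hCsrec x n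
  have hu0 : minimalSolution a x 0 = ∑' k : ℕ, (-(a : ℂ)) ^ k / Complex.Gamma (1 - x + k) :=
    tsum_congr fun k => by simp [minimalTerm, add_sub_assoc, add_comm (1 - x)]
  convert tendsto_div_Gamma_of_recurrence a x (fun n => (-1) ^ n * Cs n x) hrec using 2
  rw [hCs0, hCs1, hu0, Complex.ofReal_exp]
  ring

/-- Let `Cs` be the associated Charlier polynomials, satisfying
`x·C*_n = C*_{n+1} + (n+a)·C*_n + a·n·C*_{n−1}` for `n ≥ 1`, with `C*_0 = 0, C*_1 = 1`.
Then for every complex `x`,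
`lim_{n→∞} (−1)ⁿ C*_n(x;a) / Γ(n−x) = −e^a ∑_{k=0}^∞ (−a)^k / Γ(1−x+k)`.
(Mathlib's `Complex.Gamma` vanishes at the nonpositive integers, so each term
`1/Γ(1−x+k)` is `0` when `1−x+k` is a nonpositive integer, as intended.) -/
theorem assoc_charlier_mehler_heine_entire (a : ℝ) (ha : 0 < a) (Cs : ℕ → ℂ → ℂ)
    (hCs0 : ∀ x : ℂ, Cs 0 x = 0) (hCs1 : ∀ x : ℂ, Cs 1 x = 1)
    (hCsrec : ∀ x : ℂ, ∀ n : ℕ, x * Cs (n + 1) x =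
      Cs (n + 2) x + (((n : ℂ) + 1) + (a : ℂ)) * Cs (n + 1) x +
        (a : ℂ) * ((n : ℂ) + 1) * Cs n x)
    (x : ℂ) :
    Tendsto (fun n : ℕ => (-1 : ℂ) ^ n * Cs n x / Complex.Gamma ((n : ℂ) - x)) atTop
      (𝓝 (-(Real.exp a : ℂ) *
        ∑' k : ℕ, (-(a : ℂ)) ^ k / Complex.Gamma (1 - x + k))) :=
  assoc_charlier_mehler_heine_entire_general a Cs hCs0 hCs1 hCsrec x
end
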